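/- For positive semi-definite operators M and N, and any density operator ρ, F(M, ρ) + F(N, ρ) ≤ √(Tr M + Tr N + 2 F(M, N)). -/

import Mathlib

open ComplexOrder

/-- The positive semidefinite square root of a positive semidefinite matrix
(`Matrix.PosSemidef.sqrt`, removed from Mathlib; restored with its old definition). -/
noncomputable def Matrix.PosSemidef.sqrt {n 𝕜 : Type*} [Fintype n] [RCLike 𝕜] [DecidableEq n]
    {A : Matrix n n 𝕜} (hA : A.PosSemidef) : Matrix n n 𝕜 :=
  (hA.1.eigenvectorUnitary : Matrix n n 𝕜) *
    Matrix.diagonal (fun i => ((√(hA.1.eigenvalues i) : ℝ) : 𝕜)) *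
    (star hA.1.eigenvectorUnitary : Matrix n n 𝕜)

/-- Trace norm ‖A‖₁ = Tr √(AᴴA). -/
noncomputable def traceNorm {n : Type*} [Fintype n] [DecidableEq n]
    (A : Matrix n n ℂ) : ℝ :=
  ((Matrix.posSemidef_conjTranspose_mul_self A).sqrt.trace).re

/-!
Choose contractions `K₁, K₂` (from polar decompositions) with `Re Tr (K₁ √M √ρ) = F(M, ρ)` and
`Re Tr (K₂ √N √ρ) = F(N, ρ)`. Then `F(M, ρ) + F(N, ρ) = Re Tr (X √ρ)` for `X = K₁ √M + K₂ √N`,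
and Cauchy–Schwarz for the Hilbert–Schmidt inner product bounds this by `√(Tr X X†)` since
`Tr ρ = 1`. Expanding, `Tr K₁ M K₁† ≤ Tr M`, `Tr K₂ N K₂† ≤ Tr N`, and each cross term is
`Re Tr (K₂† K₁ √M √N) ≤ F(M, N)` because `‖B‖₁` dominates `Re Tr (K B)` for every contraction `K`.
-/

section CStarAlgebra

variable {A : Type*} [CStarAlgebra A] [PartialOrder A] [StarOrderedRing A]

theorem CStarAlgebra.star_mul_self_le_one {k : A} (hk : ‖k‖ ≤ 1) : star k * k ≤ 1 := by
  rw [← CStarAlgebra.norm_le_one_iff_of_nonneg _ (star_mul_self_nonneg k),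
    CStarRing.norm_star_mul_self]
  exact mul_le_one₀ hk (norm_nonneg k) hk

/-- Finiteness of the spectrum makes `x ↦ x⁻¹` continuous on it, so `w = b |b|⁻¹` (with
`0⁻¹ = 0`) is available through the functional calculus. -/
theorem CStarAlgebra.exists_polar_of_finite_spectrum (b : A)
    (hb : (spectrum ℝ (CFC.abs b)).Finite) :
    ∃ w : A, ‖w‖ ≤ 1 ∧ w * CFC.abs b = b ∧ star w * b = CFC.abs b := by
  set P := CFC.abs b
  have hP : IsSelfAdjoint P := .of_nonneg (CFC.abs_nonneg b)
  have hmul (f g : ℝ → ℝ) : cfc f P * cfc g P = cfc (fun x ↦ f x * g x) P :=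
    (cfc_mul f g P (hb.continuousOn f) (hb.continuousOn g)).symm
  have hbb : star b * b = cfc (fun x : ℝ ↦ x * x) P := by
    rw [← CFC.abs_mul_abs, ← hmul, cfc_id' ℝ P]
  set p := cfc (fun x : ℝ ↦ x⁻¹) P
  have hp : star p = p := (cfc_predicate _ P : IsSelfAdjoint p).star_eq
  have hbpP : b * (p * P) = b := by
    have hq : cfc (fun x : ℝ ↦ 1 - x⁻¹ * x) P = 1 - p * P := by
      rw [cfc_sub _ _ P (hb.continuousOn _) (hb.continuousOn _), cfc_const_one ℝ P,
        ← hmul, cfc_id' ℝ P]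
    have h : star (b * (1 - p * P)) * (b * (1 - p * P)) = 0 := by
      rw [← hq, star_mul, (cfc_predicate _ P : IsSelfAdjoint (cfc _ P)).star_eq, mul_assoc,
        ← mul_assoc (star b), hbb, hmul, hmul, ← cfc_const_zero ℝ P]
      refine cfc_congr fun x _ ↦ ?_
      by_cases hx : x = 0 <;> simp [hx]
    rwa [CStarRing.star_mul_self_eq_zero_iff, mul_sub, mul_one, sub_eq_zero, eq_comm] at h
  refine ⟨b * p, ?_, by rw [mul_assoc, hbpP], ?_⟩
  · have h : ‖star (b * p) * (b * p)‖ ≤ 1 := by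
      rw [star_mul, hp, mul_assoc, ← mul_assoc (star b), hbb, hmul, hmul]
      refine norm_cfc_le zero_le_one fun x _ ↦ ?_
      by_cases hx : x = 0 <;> simp [hx]
    rw [CStarRing.norm_star_mul_self] at h
    nlinarith [norm_nonneg (b * p)]
  · rw [star_mul, hp, mul_assoc, hbb, hmul]
    refine (cfc_congr fun x _ ↦ ?_).trans (cfc_id' ℝ P)
    by_cases hx : x = 0 <;> simp [hx]

end CStarAlgebra

namespace Matrix

open scoped MatrixOrder

variable {n : Type*} [Fintype n]

theorem re_trace_mono {A B : Matrix n n ℂ} (h : A ≤ B) : A.trace.re ≤ B.trace.re := by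
  have := (le_iff.mp h).trace_nonneg
  rw [trace_sub, sub_nonneg] at this
  exact (Complex.le_def.mp this).1

variable [DecidableEq n]

/-- Cauchy–Schwarz for the Hilbert–Schmidt inner product `⟪Z, W⟫ = Tr (W Z†)`. -/
theorem norm_trace_mul_le (X Y : Matrix n n ℂ) :
    ‖(X * Y).trace‖ ≤ √(X * star X).trace.re * √(star Y * Y).trace.re := by
  let := (1 : Matrix n n ℂ).toMatrixSeminormedAddCommGroup PosSemidef.one
  let := (1 : Matrix n n ℂ).toMatrixInnerProductSpace PosSemidef.one
  have hinner (Z W : Matrix n n ℂ) : inner ℂ Z W = (W * star Z).trace := by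
    show (W * 1 * Zᴴ).trace = _
    rw [mul_one]; rfl
  have hn (Z : Matrix n n ℂ) : ‖Z‖ = √(Z * star Z).trace.re := by
    rw [norm_eq_sqrt_re_inner (𝕜 := ℂ), hinner]; rfl
  have := norm_inner_le_norm (𝕜 := ℂ) (star Y) X
  rwa [hn, hn, star_star, hinner, star_star, mul_comm (√_)] at this

open scoped Matrix.Norms.L2Operator

theorem PosSemidef.sqrt_eq_cfcSqrt {A : Matrix n n ℂ} (hA : A.PosSemidef) :
    hA.sqrt = CFC.sqrt A := by
  rw [CFC.sqrt_eq_real_sqrt A hA.nonneg, cfcₙ_eq_cfc, hA.1.cfc_eq]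
  rfl

theorem PosSemidef.star_sqrt {A : Matrix n n ℂ} (hA : A.PosSemidef) : star hA.sqrt = hA.sqrt := by
  rw [hA.sqrt_eq_cfcSqrt]
  exact (IsSelfAdjoint.of_nonneg (CFC.sqrt_nonneg A)).star_eq

theorem PosSemidef.sqrt_mul_self {A : Matrix n n ℂ} (hA : A.PosSemidef) :
    hA.sqrt * hA.sqrt = A := by
  rw [hA.sqrt_eq_cfcSqrt, CFC.sqrt_mul_sqrt_self A hA.nonneg]

theorem traceNorm_eq_re_trace_abs (B : Matrix n n ℂ) :
    traceNorm B = (CFC.abs B).trace.re := by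
  rw [traceNorm, PosSemidef.sqrt_eq_cfcSqrt, CFC.abs, star_eq_conjTranspose]

theorem re_trace_conj_le {K C : Matrix n n ℂ} (hK : ‖K‖ ≤ 1) (hC : 0 ≤ C) :
    (K * C * star K).trace.re ≤ C.trace.re := by
  set S := CFC.sqrt C
  have hS : star S = S := (IsSelfAdjoint.of_nonneg (CFC.sqrt_nonneg C)).star_eq
  have hSS : S * S = C := CFC.sqrt_mul_sqrt_self C hC
  calc (K * C * star K).trace.re = (star S * (star K * K) * S).trace.re := by
        rw [← hSS, hS, trace_mul_cycle, ← mul_assoc, trace_mul_cycle, mul_assoc S, mul_assoc]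
    _ ≤ (star S * 1 * S).trace.re :=
        re_trace_mono (star_left_conjugate_le_conjugate (CStarAlgebra.star_mul_self_le_one hK) S)
    _ = C.trace.re := by rw [mul_one, hS, hSS]

/-- With `B = W |B|` and `|B| = R R`, Cauchy–Schwarz splits `Tr (K W R · R)`, and both factors are
at most `√(Tr |B|)` because `K W` is a contraction. -/
theorem re_trace_mul_le_traceNorm {K : Matrix n n ℂ} (hK : ‖K‖ ≤ 1) (B : Matrix n n ℂ) :
    (K * B).trace.re ≤ traceNorm B := by
  obtain ⟨W, hW, hWP, -⟩ := CStarAlgebra.exists_polar_of_finite_spectrum B finite_real_spectrum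
  set P := CFC.abs B
  set R := CFC.sqrt P
  have hR : star R = R := (IsSelfAdjoint.of_nonneg (CFC.sqrt_nonneg P)).star_eq
  have hRR : R * R = P := CFC.sqrt_mul_sqrt_self P (CFC.abs_nonneg B)
  have hKW : ‖K * W‖ ≤ 1 := (norm_mul_le K W).trans (mul_le_one₀ hK (norm_nonneg W) hW)
  have hP : 0 ≤ P.trace.re := by simpa using re_trace_mono (CFC.abs_nonneg B)
  rw [traceNorm_eq_re_trace_abs]
  calc (K * B).trace.re ≤ ‖(K * W * R * R).trace‖ := by
        rw [← hWP, ← hRR, ← mul_assoc, ← mul_assoc]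
        exact Complex.re_le_norm _
    _ ≤ √(K * W * R * star (K * W * R)).trace.re * √(star R * R).trace.re :=
        norm_trace_mul_le _ _
    _ = √(K * W * P * star (K * W)).trace.re * √P.trace.re := by
        rw [star_mul, hR, hRR]
        simp only [mul_assoc]
        rw [← mul_assoc R R, hRR]
    _ ≤ √P.trace.re * √P.trace.re := by
        gcongr √?_ * _
        exact re_trace_conj_le hKW (CFC.abs_nonneg B)
    _ = P.trace.re := Real.mul_self_sqrt hP

theorem exists_norm_le_one_re_trace_mul_eq_traceNorm (B : Matrix n n ℂ) :
    ∃ K : Matrix n n ℂ, ‖K‖ ≤ 1 ∧ (K * B).trace.re = traceNorm B := by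
  obtain ⟨W, hW, -, hWB⟩ := CStarAlgebra.exists_polar_of_finite_spectrum B finite_real_spectrum
  exact ⟨star W, by rwa [norm_star], by rw [hWB, traceNorm_eq_re_trace_abs]⟩

theorem re_trace_add_mul_star_le {K₁ K₂ : Matrix n n ℂ} (h₁ : ‖K₁‖ ≤ 1) (h₂ : ‖K₂‖ ≤ 1)
    (S T : Matrix n n ℂ) :
    ((K₁ * S + K₂ * T) * star (K₁ * S + K₂ * T)).trace.re
      ≤ (S * star S).trace.re + (T * star T).trace.re + 2 * traceNorm (S * star T) := by
  have hcross : (K₁ * S * star (K₂ * T)).trace.re ≤ traceNorm (S * star T) := by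
    have h : ‖star K₂ * K₁‖ ≤ 1 :=
      (norm_mul_le _ _).trans (mul_le_one₀ (by rwa [norm_star]) (norm_nonneg _) h₁)
    calc (K₁ * S * star (K₂ * T)).trace.re = (star K₂ * K₁ * (S * star T)).trace.re := by
          rw [star_mul, ← mul_assoc, trace_mul_comm]
          simp only [mul_assoc]
      _ ≤ traceNorm (S * star T) := re_trace_mul_le_traceNorm h _
  have hcross' : (K₂ * T * star (K₁ * S)).trace.re = (K₁ * S * star (K₂ * T)).trace.re := by
    rw [← star_star (K₂ * T * _), star_mul, star_star, star_eq_conjTranspose,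
      trace_conjTranspose, Complex.star_def, Complex.conj_re]
  have hS := re_trace_conj_le h₁ (mul_star_self_nonneg S)
  have hT := re_trace_conj_le h₂ (mul_star_self_nonneg T)
  simp only [star_add, add_mul, mul_add, trace_add, Complex.add_re, star_mul, ← mul_assoc] at *
  linarith

end Matrix

open Matrix in
/-- For PSD M, N and any density operator ρ:
F(M,ρ) + F(N,ρ) ≤ √(Tr M + Tr N + 2 F(M,N)). -/
theorem fidelity_sum_le
    {n : Type*} [Fintype n] [DecidableEq n]
    (M N ρ : Matrix n n ℂ) (hM : M.PosSemidef) (hN : N.PosSemidef)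
    (hρ : ρ.PosSemidef) (hρtr : ρ.trace = 1) :
    traceNorm (hM.sqrt * hρ.sqrt) + traceNorm (hN.sqrt * hρ.sqrt)
      ≤ Real.sqrt (M.trace.re + N.trace.re + 2 * traceNorm (hM.sqrt * hN.sqrt)) := by
  obtain ⟨K₁, hK₁, h₁⟩ := exists_norm_le_one_re_trace_mul_eq_traceNorm (hM.sqrt * hρ.sqrt)
  obtain ⟨K₂, hK₂, h₂⟩ := exists_norm_le_one_re_trace_mul_eq_traceNorm (hN.sqrt * hρ.sqrt)
  set X := K₁ * hM.sqrt + K₂ * hN.sqrt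
  have hX := re_trace_add_mul_star_le hK₁ hK₂ hM.sqrt hN.sqrt
  rw [hM.star_sqrt, hN.star_sqrt, hM.sqrt_mul_self, hN.sqrt_mul_self] at hX
  calc traceNorm (hM.sqrt * hρ.sqrt) + traceNorm (hN.sqrt * hρ.sqrt)
      = (X * hρ.sqrt).trace.re := by
        rw [← h₁, ← h₂, add_mul, trace_add, Complex.add_re, mul_assoc, mul_assoc]
    _ ≤ ‖(X * hρ.sqrt).trace‖ := Complex.re_le_norm _
    _ ≤ √(X * star X).trace.re * √(star hρ.sqrt * hρ.sqrt).trace.re := norm_trace_mul_le _ _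
    _ = √(X * star X).trace.re := by
        rw [hρ.star_sqrt, hρ.sqrt_mul_self, hρtr, Complex.one_re, Real.sqrt_one, mul_one]
    _ ≤ _ := Real.sqrt_le_sqrt hX
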